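/- Suppose 0 ≤ c(z,a) ≤ M and 0 ≤ w2(z) ≤ K for all z ∈ Z, a ∈ {0,1}, with M, K > 0. Then the dual function d attains a unique minimizer λ* over [0, ∞), and the projected gradient iterates λ_{t+1} = max(0, λ_t − η d′(λ_t)) with step size η = 2β/(M²K² + 2β²) and any initialization λ_0 ≥ 0 satisfy |λ_t − λ*| ≤ ( M²K²/(M²K² + 2β²) )^t · |λ_0 − λ*| for every t ≥ 0. -/

import Mathlib

open Finset

/-- `q_λ(z,a) = w1(z) r(z,a) − λ w2(z) c(z,a)`. -/
noncomputable def qfun {Z : Type*} (r c : Z → Bool → ℝ) (w1 w2 : Z → ℝ)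
    (lam : ℝ) (z : Z) (a : Bool) : ℝ :=
  w1 z * r z a - lam * (w2 z * c z a)

/-- Partition function `Q(z,λ) = ∑_a exp(q_λ(z,a)/β)`. -/
noncomputable def Qpart {Z : Type*} (r c : Z → Bool → ℝ) (w1 w2 : Z → ℝ)
    (β lam : ℝ) (z : Z) : ℝ :=
  ∑ a, Real.exp (qfun r c w1 w2 lam z a / β)

/-- The dual function `d(λ) = β ∑_z ρ(z) log Q(z,λ) + λ C + (β/2) λ²`. -/
noncomputable def dualFun {Z : Type*} [Fintype Z] (ρ : Z → ℝ)
    (r c : Z → Bool → ℝ) (w1 w2 : Z → ℝ) (β C lam : ℝ) : ℝ :=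
  β * ∑ z, ρ z * Real.log (Qpart r c w1 w2 β lam z) + lam * C + β * lam ^ 2 / 2

/-! The dual function is smooth with `d''(λ) = β + β⁻¹ ∑_z ρ(z) Var_{π_λ(·|z)}(w2 c)`, and the
variance of a quantity with values in `[0, MK]` is at most `(MK)²/4`; hence
`β ≤ d'' ≤ L := β + M²K²/(4β)`. The gradient step `λ ↦ λ - η d'(λ)` then has derivative in
`[1 - ηL, 1 - ηβ] ⊆ [0, 1 - ηβ]` because `ηL ≤ 1`, and clipping at `0` keeps it a contraction with
factor `1 - ηβ = M²K²/(M²K² + 2β²)`. By the first-order optimality condition for the convex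
function `d`, its fixed points are exactly the minimizers of `d` on `[0, ∞)`, so Banach's fixed
point theorem gives both the unique minimizer and the linear rate. -/

open Function Real

section ProjectedGradient

noncomputable def projGradStep (g : ℝ → ℝ) (η u : ℝ) : ℝ := max 0 (u - η * g u)

variable {f g g' : ℝ → ℝ} {m L η y : ℝ}

theorem ConvexOn.add_mul_sub_le_of_hasDerivAt (hf : ConvexOn ℝ Set.univ f) {f' : ℝ}
    (hy : HasDerivAt f f' y) (x : ℝ) : f y + f' * (x - y) ≤ f x := by
  rcases lt_trichotomy x y with hxy | rfl | hxy
  · have := hf.slope_le_of_hasDerivAt (Set.mem_univ x) (Set.mem_univ y) hxy hy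
    rw [slope_def_field, div_le_iff₀ (sub_pos.2 hxy)] at this
    linarith
  · simp
  · have := hf.le_slope_of_hasDerivAt (Set.mem_univ y) (Set.mem_univ x) hxy hy
    rw [slope_def_field, le_div_iff₀ (sub_pos.2 hxy)] at this
    linarith

theorem isMinOn_Ici_zero_iff (hf : ∀ x, HasDerivAt f (g x) x) (hg : Monotone g) (hy : 0 ≤ y) :
    IsMinOn f (Set.Ici 0) y ↔ ∀ x, 0 ≤ x → 0 ≤ g y * (x - y) := by
  constructor
  · intro hmin x hx
    have hcone : x - y ∈ posTangentConeAt (Set.Ici 0) y :=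
      sub_mem_posTangentConeAt_of_segment_subset ((convex_Ici 0).segment_subset hy hx)
    simpa [mul_comm] using
      hmin.localize.hasFDerivWithinAt_nonneg (hf y).hasDerivWithinAt.hasFDerivWithinAt hcone
  · intro hvi
    have hderiv : deriv f = g := funext fun x => (hf x).deriv
    have hconv : ConvexOn ℝ Set.univ f :=
      Monotone.convexOn_univ_of_deriv (fun x => (hf x).differentiableAt) (hderiv ▸ hg)
    refine isMinOn_iff.2 fun x hx => ?_
    linarith [hconv.add_mul_sub_le_of_hasDerivAt (hf y) x, hvi x hx]

theorem max_zero_sub_mul_eq_self_iff {v : ℝ} (hη : 0 < η) :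
    max 0 (y - η * v) = y ↔ 0 ≤ y ∧ ∀ x, 0 ≤ x → 0 ≤ v * (x - y) := by
  constructor
  · intro hfix
    have hy : 0 ≤ y := hfix ▸ le_max_left _ _
    refine ⟨hy, fun x hx => ?_⟩
    rcases le_total (y - η * v) 0 with h | h
    · have hy0 : y = 0 := by rw [← hfix, max_eq_left h]
      subst hy0
      have hv : 0 ≤ v := by nlinarith
      simpa using mul_nonneg hv hx
    · have hv : η * v = 0 := by rw [max_eq_right h] at hfix; linarith
      simp [(mul_eq_zero.1 hv).resolve_left hη.ne']
  · rintro ⟨hy, hvi⟩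
    have hv : 0 ≤ v := by simpa using hvi (y + 1) (by linarith)
    rcases hy.eq_or_lt with rfl | hy
    · simpa using mul_nonneg hη.le hv
    · have : v * (0 - y) ≥ 0 := hvi 0 le_rfl
      have hv0 : v = 0 := le_antisymm (by nlinarith) hv
      simp [hv0, hy.le]

theorem isFixedPt_projGradStep_iff (hf : ∀ x, HasDerivAt f (g x) x) (hg : Monotone g)
    (hη : 0 < η) :
    IsFixedPt (projGradStep g η) y ↔ y ∈ Set.Ici 0 ∧ IsMinOn f (Set.Ici 0) y := by
  rw [IsFixedPt, projGradStep, max_zero_sub_mul_eq_self_iff hη]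
  exact and_congr_right fun hy => (isMinOn_Ici_zero_iff hf hg hy).symm

theorem lipschitzWith_projGradStep (hg : ∀ x, HasDerivAt g (g' x) x)
    (hg' : ∀ x, g' x ∈ Set.Icc m L) (hη : 0 ≤ η) (hηL : η * L ≤ 1) :
    LipschitzWith (1 - η * m).toNNReal (projGradStep g η) := by
  have hstep : ∀ x, HasDerivAt (fun u => u - η * g u) (1 - η * g' x) x := fun x =>
    (hasDerivAt_id x).sub ((hg x).const_mul η)
  have hbound : ∀ x, ‖1 - η * g' x‖ ≤ 1 - η * m := fun x => by
    have := mul_le_mul_of_nonneg_left (hg' x).1 hη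
    have := mul_le_mul_of_nonneg_left (hg' x).2 hη
    rw [Real.norm_eq_abs, abs_le]; constructor <;> linarith
  refine LipschitzWith.const_max (LipschitzWith.of_dist_le_mul fun x y => ?_) 0
  have := Convex.norm_image_sub_le_of_norm_hasDerivWithin_le
    (fun x _ => (hstep x).hasDerivWithinAt) (fun x _ => hbound x) convex_univ
    (Set.mem_univ y) (Set.mem_univ x)
  rw [Real.coe_toNNReal _ ((norm_nonneg _).trans (hbound x)), dist_eq_norm, dist_eq_norm]
  exact this

theorem projectedGradient_Ici_linear_convergence (hf : ∀ x, HasDerivAt f (g x) x)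
    (hg : ∀ x, HasDerivAt g (g' x) x) (hg' : ∀ x, g' x ∈ Set.Icc m L) (hm : 0 < m)
    (hη : 0 < η) (hηL : η * L ≤ 1) :
    (∃! y, y ∈ Set.Ici 0 ∧ ∀ x ∈ Set.Ici 0, f y ≤ f x) ∧
    ∀ y, (y ∈ Set.Ici 0 ∧ ∀ x ∈ Set.Ici 0, f y ≤ f x) →
      ∀ u : ℕ → ℝ, (∀ t, u (t + 1) = max 0 (u t - η * deriv f (u t))) →
        ∀ t, |u t - y| ≤ (1 - η * m) ^ t * |u 0 - y| := by
  have hmono : Monotone g := monotone_of_deriv_nonneg (fun x => (hg x).differentiableAt)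
    fun x => (hg x).deriv ▸ hm.le.trans (hg' x).1
  have hmin_iff : ∀ y, (y ∈ Set.Ici 0 ∧ ∀ x ∈ Set.Ici 0, f y ≤ f x) ↔
      IsFixedPt (projGradStep g η) y := fun y => by
    rw [isFixedPt_projGradStep_iff hf hmono hη, isMinOn_iff]
  have hLip := lipschitzWith_projGradStep hg hg' hη.le hηL
  have hT : ContractingWith (1 - η * m).toNNReal (projGradStep g η) :=
    ⟨Real.toNNReal_lt_one.2 (by linarith [mul_pos hη hm]), hLip⟩
  refine ⟨⟨ContractingWith.fixedPoint _ hT, (hmin_iff _).2 hT.fixedPoint_isFixedPt,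
    fun y hy => hT.fixedPoint_unique ((hmin_iff y).1 hy)⟩, fun y hy u hu t => ?_⟩
  have hiter : ∀ t, u t = (projGradStep g η)^[t] (u 0) := fun t => by
    induction t with
    | zero => rfl
    | succ t ih => rw [hu, iterate_succ_apply', ← ih, projGradStep, (hf (u t)).deriv]
  have hκ : 0 ≤ 1 - η * m := by
    have := mul_le_mul_of_nonneg_left ((hg' 0).1.trans (hg' 0).2) hη.le
    linarith
  have := (hLip.iterate t).dist_le_mul (u 0) y
  rwa [← hiter, ((hmin_iff y).1 hy).iterate t, NNReal.coe_pow, Real.coe_toNNReal _ hκ,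
    Real.dist_eq, Real.dist_eq] at this

end ProjectedGradient

theorem sq_sum_mul_le_sum_mul_sq {ι : Type*} (s : Finset ι) {p : ι → ℝ} (hp : ∀ i ∈ s, 0 ≤ p i)
    (hp1 : ∑ i ∈ s, p i = 1) (f : ι → ℝ) : (∑ i ∈ s, p i * f i) ^ 2 ≤ ∑ i ∈ s, p i * f i ^ 2 := by
  have := sum_sq_le_sum_mul_sum_of_sq_le_mul s hp
    (fun i hi => mul_nonneg (hp i hi) (sq_nonneg (f i))) (r := fun i => p i * f i)
    fun i _ => (by ring : (p i * f i) ^ 2 = p i * (p i * f i ^ 2)).le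
  rwa [hp1, one_mul] at this

theorem sum_mul_sq_sub_sq_le {ι : Type*} (s : Finset ι) {p f : ι → ℝ} {B : ℝ}
    (hp : ∀ i ∈ s, 0 ≤ p i) (hf : ∀ i ∈ s, f i ∈ Set.Icc 0 B) :
    ∑ i ∈ s, p i * f i ^ 2 - (∑ i ∈ s, p i * f i) ^ 2 ≤ B ^ 2 / 4 := by
  have hsq : ∑ i ∈ s, p i * f i ^ 2 ≤ B * ∑ i ∈ s, p i * f i := by
    rw [mul_sum]
    refine sum_le_sum fun i hi => ?_
    have := mul_nonneg (hp i hi) (mul_nonneg (hf i hi).1 (sub_nonneg.2 (hf i hi).2))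
    nlinarith
  nlinarith [sq_nonneg (B - 2 * ∑ i ∈ s, p i * f i)]

section Gibbs

variable {α : Type*} [Fintype α] (s b : α → ℝ) (β l : ℝ)

noncomputable def partitionFn : ℝ := ∑ a, exp ((s a - l * b a) / β)

noncomputable def gibbsProb (a : α) : ℝ := exp ((s a - l * b a) / β) / partitionFn s b β l

noncomputable def gibbsMean : ℝ := ∑ a, gibbsProb s b β l a * b a

noncomputable def gibbsVar : ℝ := ∑ a, gibbsProb s b β l a * b a ^ 2 - gibbsMean s b β l ^ 2

theorem partitionFn_pos [Nonempty α] : 0 < partitionFn s b β l :=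
  sum_pos (fun _ _ => exp_pos _) univ_nonempty

theorem gibbsProb_nonneg (a : α) : 0 ≤ gibbsProb s b β l a := by
  have : 0 ≤ partitionFn s b β l := sum_nonneg fun _ _ => (exp_pos _).le
  unfold gibbsProb; positivity

theorem sum_gibbsProb [Nonempty α] : ∑ a, gibbsProb s b β l a = 1 := by
  simp only [gibbsProb, ← sum_div]
  exact div_self (partitionFn_pos s b β l).ne'

theorem sum_gibbsProb_mul (f : α → ℝ) :
    ∑ a, gibbsProb s b β l a * f a =
      (∑ a, exp ((s a - l * b a) / β) * f a) / partitionFn s b β l := by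
  simp only [gibbsProb, sum_div, div_mul_eq_mul_div]

theorem hasDerivAt_sum_exp_mul (f : α → ℝ) :
    HasDerivAt (fun l => ∑ a, exp ((s a - l * b a) / β) * f a)
      (-(∑ a, exp ((s a - l * b a) / β) * (b a * f a)) / β) l := by
  have hexp : ∀ a, HasDerivAt (fun l => exp ((s a - l * b a) / β) * f a)
      (exp ((s a - l * b a) / β) * (-b a / β) * f a) l := fun a =>
    ((((hasDerivAt_id l).mul_const (b a)).const_sub (s a)).div_const β).exp.mul_const (f a)
      |>.congr_deriv (by simp)
  refine (HasDerivAt.fun_sum fun a _ => hexp a).congr_deriv ?_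
  rw [neg_div, sum_div, ← sum_neg_distrib]
  exact sum_congr rfl fun a _ => by ring

variable {s b β}

theorem hasDerivAt_partitionFn :
    HasDerivAt (fun l => partitionFn s b β l)
      (-(∑ a, exp ((s a - l * b a) / β) * b a) / β) l := by
  simpa [partitionFn] using hasDerivAt_sum_exp_mul s b β l 1

theorem hasDerivAt_log_partitionFn [Nonempty α] :
    HasDerivAt (fun l => log (partitionFn s b β l)) (-gibbsMean s b β l / β) l := by
  refine ((hasDerivAt_partitionFn l).log (partitionFn_pos s b β l).ne').congr_deriv ?_
  rw [gibbsMean, sum_gibbsProb_mul]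
  ring

theorem hasDerivAt_gibbsMean [Nonempty α] :
    HasDerivAt (fun l => gibbsMean s b β l) (-gibbsVar s b β l / β) l := by
  have hquot := (hasDerivAt_sum_exp_mul s b β l b).div (hasDerivAt_partitionFn l)
    (partitionFn_pos s b β l).ne'
  refine (hquot.congr_deriv ?_).congr_of_eventuallyEq
    (Filter.Eventually.of_forall fun l => sum_gibbsProb_mul s b β l b)
  simp only [gibbsVar, gibbsMean, sum_gibbsProb_mul, ← sq]
  field_simp
  ring

theorem gibbsVar_nonneg [Nonempty α] : 0 ≤ gibbsVar s b β l := by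
  have := sq_sum_mul_le_sum_mul_sq univ (fun a _ => gibbsProb_nonneg s b β l a)
    (sum_gibbsProb s b β l) b
  rw [gibbsVar, gibbsMean]
  linarith

theorem gibbsVar_le {B : ℝ} (hb : ∀ a, b a ∈ Set.Icc 0 B) : gibbsVar s b β l ≤ B ^ 2 / 4 :=
  sum_mul_sq_sub_sq_le univ (fun a _ => gibbsProb_nonneg s b β l a) fun a _ => hb a

end Gibbs

section Dual

variable {Z : Type*} [Fintype Z] {ρ : Z → ℝ} {r c : Z → Bool → ℝ} {w1 w2 : Z → ℝ} {β C : ℝ}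

-- `Qpart r c w1 w2 β lam z` unfolds to `partitionFn (w1 z * r z ·) (w2 z * c z ·) β lam`.
noncomputable def dualDeriv (ρ : Z → ℝ) (r c : Z → Bool → ℝ) (w1 w2 : Z → ℝ) (β C lam : ℝ) : ℝ :=
  -∑ z, ρ z * gibbsMean (fun a => w1 z * r z a) (fun a => w2 z * c z a) β lam + C + β * lam

noncomputable def dualDeriv2 (ρ : Z → ℝ) (r c : Z → Bool → ℝ) (w1 w2 : Z → ℝ) (β lam : ℝ) : ℝ :=
  (∑ z, ρ z * gibbsVar (fun a => w1 z * r z a) (fun a => w2 z * c z a) β lam) / β + β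

theorem hasDerivAt_dualFun (hβ : β ≠ 0) (lam : ℝ) :
    HasDerivAt (fun l => dualFun ρ r c w1 w2 β C l) (dualDeriv ρ r c w1 w2 β C lam) lam := by
  have hlog := fun z => (hasDerivAt_log_partitionFn (s := fun a => w1 z * r z a)
    (b := fun a => w2 z * c z a) (β := β) lam).const_mul (ρ z)
  have := (((HasDerivAt.fun_sum (u := univ) fun z _ => hlog z).const_mul β).add
    ((hasDerivAt_id lam).mul_const C)).add (((hasDerivAt_pow 2 lam).const_mul β).div_const 2)
  refine this.congr_deriv ?_
  simp only [dualDeriv, mul_sum, Nat.cast_ofNat, ← sum_neg_distrib]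
  field_simp
  ring

theorem hasDerivAt_dualDeriv (lam : ℝ) :
    HasDerivAt (fun l => dualDeriv ρ r c w1 w2 β C l) (dualDeriv2 ρ r c w1 w2 β lam) lam := by
  have hmean := fun z => (hasDerivAt_gibbsMean (s := fun a => w1 z * r z a)
    (b := fun a => w2 z * c z a) (β := β) lam).const_mul (ρ z)
  have := (((HasDerivAt.fun_sum (u := univ) fun z _ => hmean z).neg.add_const C).add
    ((hasDerivAt_id lam).const_mul β))
  refine this.congr_deriv ?_
  simp only [dualDeriv2, sum_div, mul_div_assoc', neg_div, mul_neg, sum_neg_distrib, neg_neg,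
    mul_one]

theorem dualDeriv2_mem_Icc (hβ : 0 < β) (hρ : ∀ z, 0 ≤ ρ z) (hρ1 : ∑ z, ρ z = 1) {M K : ℝ}
    (hc : ∀ z a, 0 ≤ c z a ∧ c z a ≤ M) (hw2 : ∀ z, 0 ≤ w2 z) (hw2K : ∀ z, w2 z ≤ K)
    (lam : ℝ) : dualDeriv2 ρ r c w1 w2 β lam ∈ Set.Icc β (β + M ^ 2 * K ^ 2 / (4 * β)) := by
  have hb : ∀ z a, w2 z * c z a ∈ Set.Icc 0 (K * M) := fun z a =>
    ⟨mul_nonneg (hw2 z) (hc z a).1,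
      mul_le_mul (hw2K z) (hc z a).2 (hc z a).1 ((hw2 z).trans (hw2K z))⟩
  have hlo : 0 ≤ ∑ z, ρ z * gibbsVar (fun a => w1 z * r z a) (fun a => w2 z * c z a) β lam :=
    sum_nonneg fun z _ => mul_nonneg (hρ z) (gibbsVar_nonneg _)
  have hhi : ∑ z, ρ z * gibbsVar (fun a => w1 z * r z a) (fun a => w2 z * c z a) β lam
      ≤ (K * M) ^ 2 / 4 := by
    calc _ ≤ ∑ z, ρ z * ((K * M) ^ 2 / 4) :=
          sum_le_sum fun z _ => mul_le_mul_of_nonneg_left (gibbsVar_le _ (hb z)) (hρ z)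
      _ = (K * M) ^ 2 / 4 := by rw [← sum_mul, hρ1, one_mul]
  rw [dualDeriv2]
  constructor
  · linarith [div_nonneg hlo hβ.le]
  · rw [add_comm β, add_le_add_iff_right, div_le_div_iff₀ hβ (by positivity)]
    nlinarith

end Dual

theorem projected_gradient_linear_convergence_general {Z : Type*} [Fintype Z]
    (ρ : Z → ℝ) (hρ_pos : ∀ z, 0 < ρ z) (hρ_sum : ∑ z, ρ z = 1)
    (r c : Z → Bool → ℝ) (w1 w2 : Z → ℝ)
    (hw2 : ∀ z, 0 ≤ w2 z)
    (β : ℝ) (hβ : 0 < β) (C : ℝ)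
    (M K : ℝ)
    (hc_bound : ∀ z a, 0 ≤ c z a ∧ c z a ≤ M)
    (hw2_bound : ∀ z, w2 z ≤ K) :
    (∃! lamstar : ℝ, lamstar ∈ Set.Ici (0 : ℝ) ∧
      ∀ lam ∈ Set.Ici (0 : ℝ),
        dualFun ρ r c w1 w2 β C lamstar ≤ dualFun ρ r c w1 w2 β C lam) ∧
    (∀ lamstar : ℝ,
      (lamstar ∈ Set.Ici (0 : ℝ) ∧
        ∀ lam ∈ Set.Ici (0 : ℝ),
          dualFun ρ r c w1 w2 β C lamstar ≤ dualFun ρ r c w1 w2 β C lam) →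
      ∀ seq : ℕ → ℝ, 0 ≤ seq 0 →
        (∀ t : ℕ, seq (t + 1)
          = max 0 (seq t - 2 * β / (M ^ 2 * K ^ 2 + 2 * β ^ 2)
              * deriv (fun l => dualFun ρ r c w1 w2 β C l) (seq t))) →
        ∀ t : ℕ,
          |seq t - lamstar|
            ≤ (M ^ 2 * K ^ 2 / (M ^ 2 * K ^ 2 + 2 * β ^ 2)) ^ t * |seq 0 - lamstar|) := by
  have hD : 0 < M ^ 2 * K ^ 2 + 2 * β ^ 2 := by positivity
  have hηL : 2 * β / (M ^ 2 * K ^ 2 + 2 * β ^ 2) * (β + M ^ 2 * K ^ 2 / (4 * β)) ≤ 1 := by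
    rw [div_mul_eq_mul_div, div_le_one hD]
    field_simp
    nlinarith [sq_nonneg (M * K)]
  have hrate : M ^ 2 * K ^ 2 / (M ^ 2 * K ^ 2 + 2 * β ^ 2)
      = 1 - 2 * β / (M ^ 2 * K ^ 2 + 2 * β ^ 2) * β := by
    field_simp
    ring
  obtain ⟨hmin, hconv⟩ := projectedGradient_Ici_linear_convergence
    (f := fun l => dualFun ρ r c w1 w2 β C l) (hasDerivAt_dualFun hβ.ne') hasDerivAt_dualDeriv
    (dualDeriv2_mem_Icc hβ (fun z => (hρ_pos z).le) hρ_sum hc_bound hw2 hw2_bound)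
    hβ (by positivity) hηL
  exact ⟨hmin, fun y hy u _ hu t => hrate ▸ hconv y hy u hu t⟩

/-- the dual function attains a unique minimizer over `[0,∞)`,
and projected gradient descent with step size `η = 2β/(M²K² + 2β²)` converges
to it at the linear rate `M²K²/(M²K² + 2β²)`. -/
theorem projected_gradient_linear_convergence {Z : Type*} [Fintype Z] [Nonempty Z]
    (ρ : Z → ℝ) (hρ_pos : ∀ z, 0 < ρ z) (hρ_sum : ∑ z, ρ z = 1)
    (r c : Z → Bool → ℝ) (w1 w2 : Z → ℝ)
    (hw1 : ∀ z, 0 ≤ w1 z) (hw2 : ∀ z, 0 ≤ w2 z)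
    (β : ℝ) (hβ : 0 < β) (C : ℝ)
    (M K : ℝ) (hM : 0 < M) (hK : 0 < K)
    (hc_bound : ∀ z a, 0 ≤ c z a ∧ c z a ≤ M)
    (hw2_bound : ∀ z, w2 z ≤ K) :
    (∃! lamstar : ℝ, lamstar ∈ Set.Ici (0 : ℝ) ∧
      ∀ lam ∈ Set.Ici (0 : ℝ),
        dualFun ρ r c w1 w2 β C lamstar ≤ dualFun ρ r c w1 w2 β C lam) ∧
    (∀ lamstar : ℝ,
      (lamstar ∈ Set.Ici (0 : ℝ) ∧
        ∀ lam ∈ Set.Ici (0 : ℝ),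
          dualFun ρ r c w1 w2 β C lamstar ≤ dualFun ρ r c w1 w2 β C lam) →
      ∀ seq : ℕ → ℝ, 0 ≤ seq 0 →
        (∀ t : ℕ, seq (t + 1)
          = max 0 (seq t - 2 * β / (M ^ 2 * K ^ 2 + 2 * β ^ 2)
              * deriv (fun l => dualFun ρ r c w1 w2 β C l) (seq t))) →
        ∀ t : ℕ,
          |seq t - lamstar|
            ≤ (M ^ 2 * K ^ 2 / (M ^ 2 * K ^ 2 + 2 * β ^ 2)) ^ t * |seq 0 - lamstar|) :=
  projected_gradient_linear_convergence_general ρ hρ_pos hρ_sum r c w1 w2 hw2 β hβ C M K hc_bound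
    hw2_bound
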